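/- Every Lie algebra automorphism σ of Q_{2m+1} is represented by an upper triangular matrix A=(a_{ik}) in the basis e_1,...,e_{2m+1} (i.e. a_{ik}=0 for k<i), with a_{11}=p≠0, a_{22}=q≠0, a_{12}=q-p, a_{kk}=p^{k-2}q for 3≤k≤2m, and a_{2m+1,2m+1}=p^{2m-2}q^2. -/
import Mathlib

open Finset Module

private lemma dsum_antisym {β : Type} [AddCommMonoid β] (s : Finset ℕ) (F : ℕ → ℕ → β)
    (hdiag : ∀ j ∈ s, F j j = 0) :
    ∑ j ∈ s, ∑ l ∈ s, F j l = ∑ j ∈ s, ∑ l ∈ s with j < l, (F j l + F l j) := by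
  have h1 : ∀ j ∈ s, ∑ l ∈ s, F j l
      = (∑ l ∈ s with j < l, F j l) + ∑ l ∈ s with l < j, F j l := by
    intro j hj
    rw [← Finset.sum_filter_add_sum_filter_not s (fun l => j < l) (F j)]
    congr 1
    have hset : s.filter (fun l => ¬ j < l) = insert j (s.filter (fun l => l < j)) := by
      ext x
      simp only [Finset.mem_filter, Finset.mem_insert]
      constructor
      · intro ⟨hx, hnx⟩
        by_cases hxj : x = j
        · exact Or.inl hxj
        · exact Or.inr ⟨hx, by omega⟩
      · rintro (rfl | ⟨hx, hlt⟩)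
        · exact ⟨hj, by omega⟩
        · exact ⟨hx, by omega⟩
    rw [hset, Finset.sum_insert (by simp), hdiag j hj, zero_add]
  rw [Finset.sum_congr rfl h1, Finset.sum_add_distrib]
  have h2 : ∑ j ∈ s, ∑ l ∈ s with l < j, F j l
      = ∑ j ∈ s, ∑ l ∈ s with j < l, F l j := by
    rw [Finset.sum_comm' (t := fun j => s.filter (· < j)) (t' := s)
      (s' := fun l => s.filter (l < ·))]
    intro x y
    simp only [Finset.mem_filter]
    tauto
  rw [h2, ← Finset.sum_add_distrib]
  exact Finset.sum_congr rfl fun j _ => (Finset.sum_add_distrib).symm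

private lemma sum_lie' {L : Type} [LieRing L] (s : Finset ℕ) (f : ℕ → L) (y : L) :
    ⁅∑ i ∈ s, f i, y⁆ = ∑ i ∈ s, ⁅f i, y⁆ := by
  induction s using Finset.cons_induction with
  | empty => simp
  | cons a s ha ih => rw [Finset.sum_cons, add_lie, ih, Finset.sum_cons]

private lemma lie_sum' {L : Type} [LieRing L] (s : Finset ℕ) (f : ℕ → L) (y : L) :
    ⁅y, ∑ i ∈ s, f i⁆ = ∑ i ∈ s, ⁅y, f i⁆ := by
  induction s using Finset.cons_induction with
  | empty => simp
  | cons a s ha ih => rw [Finset.sum_cons, lie_add, ih, Finset.sum_cons]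

section

variable {m : ℕ} (hm : 2 ≤ m) {L : Type} [LieRing L] [LieAlgebra ℂ L]
  (e : ℕ → L) (b : Basis (Fin (2*m+1)) ℂ L)
  (hb : ∀ i : Fin (2*m+1), b i = e (i.val+1))
  (hrel1 : ∀ k, 2 ≤ k → k ≤ 2*m → ⁅e 1, e k⁆ = e (k+1))
  (hrel2 : ∀ k, 2 ≤ k → k ≤ m → ⁅e k, e (2*m+2-k)⁆ = ((-1:ℂ))^k • e (2*m+1))
  (hrel0 : ∀ i j, 1 ≤ i → i < j → j ≤ 2*m+1 →
      ¬(i = 1 ∧ j ≤ 2*m) → ¬(2 ≤ i ∧ i ≤ m ∧ j = 2*m+2-i) → ⁅e i, e j⁆ = 0)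

include hb

lemma sumIcc_eq (w : ℕ → ℂ) :
    ∑ k ∈ Icc 1 (2*m+1), w k • e k = ∑ i : Fin (2*m+1), w (i.val+1) • b i := by
  have hmap : Icc 1 (2*m+1) = (range (2*m+1)).map (addRightEmbedding 1) := by
    ext x
    simp only [Finset.mem_Icc, Finset.mem_map, Finset.mem_range, addRightEmbedding_apply]
    constructor
    · intro h
      exact ⟨x-1, by omega, by omega⟩
    · rintro ⟨a, ha, rfl⟩
      omega
  rw [hmap, Finset.sum_map]
  simp only [addRightEmbedding_apply]
  rw [← Fin.sum_univ_eq_sum_range (fun j => w (j+1) • e (j+1)) (2*m+1)]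
  exact Finset.sum_congr rfl fun i _ => by rw [hb]

lemma repr_sumIcc (w : ℕ → ℂ) (t : Fin (2*m+1)) :
    b.repr (∑ k ∈ Icc 1 (2*m+1), w k • e k) t = w (t.val+1) := by
  rw [sumIcc_eq e b hb w, Basis.repr_sum_self]

include hm hrel1 hrel2 hrel0

lemma keybracket (u v : ℕ → ℂ) :
    ⁅∑ j ∈ Icc 1 (2*m+1), u j • e j, ∑ l ∈ Icc 1 (2*m+1), v l • e l⁆
      = ∑ l ∈ Icc 2 (2*m), (u 1 * v l - u l * v 1) • e (l+1)
        + (∑ j ∈ Icc 2 m, (-1:ℂ)^j * (u j * v (2*m+2-j) - u (2*m+2-j) * v j)) • e (2*m+1) := by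
  have expand : ⁅∑ j ∈ Icc 1 (2*m+1), u j • e j, ∑ l ∈ Icc 1 (2*m+1), v l • e l⁆
      = ∑ j ∈ Icc 1 (2*m+1), ∑ l ∈ Icc 1 (2*m+1), (u j * v l) • ⁅e j, e l⁆ := by
    rw [sum_lie']
    refine Finset.sum_congr rfl fun j _ => ?_
    rw [lie_sum']
    refine Finset.sum_congr rfl fun l _ => ?_
    rw [smul_lie, lie_smul, smul_smul]
  have hG : ∀ j l : ℕ, (u j * v l) • ⁅e j, e l⁆ + (u l * v j) • ⁅e l, e j⁆
      = (u j * v l - u l * v j) • ⁅e j, e l⁆ := by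
    intro j l
    rw [show ⁅e l, e j⁆ = -⁅e j, e l⁆ from (lie_skew (e l) (e j)).symm]
    rw [smul_neg, sub_smul]
    abel
  have step : ⁅∑ j ∈ Icc 1 (2*m+1), u j • e j, ∑ l ∈ Icc 1 (2*m+1), v l • e l⁆
      = ∑ j ∈ Icc 1 (2*m+1), ∑ l ∈ Icc 1 (2*m+1) with j < l,
          (u j * v l - u l * v j) • ⁅e j, e l⁆ := by
    rw [expand, dsum_antisym (Icc 1 (2*m+1)) (fun j l => (u j * v l) • ⁅e j, e l⁆)
      (fun j _ => by simp)]
    exact Finset.sum_congr rfl fun j _ => Finset.sum_congr rfl fun l _ => hG j l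
  rw [step, ← Finset.add_sum_erase _ _ (show (1:ℕ) ∈ Icc 1 (2*m+1) by
    simp only [Finset.mem_Icc]; omega)]
  have hj1 : ∑ l ∈ Icc 1 (2*m+1) with 1 < l, (u 1 * v l - u l * v 1) • ⁅e 1, e l⁆
      = ∑ l ∈ Icc 2 (2*m), (u 1 * v l - u l * v 1) • e (l+1) := by
    have hf : (Icc 1 (2*m+1)).filter (fun l => 1 < l) = Icc 2 (2*m+1) := by
      ext x; simp only [Finset.mem_filter, Finset.mem_Icc]; omega
    rw [hf]
    have h2 : Icc 2 (2*m+1) = insert (2*m+1) (Icc 2 (2*m)) := by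
      ext x; simp only [Finset.mem_insert, Finset.mem_Icc]; omega
    rw [h2, Finset.sum_insert (by simp only [Finset.mem_Icc]; omega)]
    rw [hrel0 1 (2*m+1) (by omega) (by omega) (by omega) (by omega) (by omega),
      smul_zero, zero_add]
    refine Finset.sum_congr rfl fun l hl => ?_
    simp only [Finset.mem_Icc] at hl
    rw [hrel1 l hl.1 hl.2]
  have hj2 : ∀ j ∈ (Icc 1 (2*m+1)).erase 1,
      (∑ l ∈ Icc 1 (2*m+1) with j < l, (u j * v l - u l * v j) • ⁅e j, e l⁆)
      = if j ≤ m then ((-1:ℂ)^j * (u j * v (2*m+2-j) - u (2*m+2-j) * v j)) • e (2*m+1)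
        else 0 := by
    intro j hj
    simp only [Finset.mem_erase, Finset.mem_Icc] at hj
    by_cases hjm : j ≤ m
    · rw [if_pos hjm]
      rw [Finset.sum_eq_single_of_mem (2*m+2-j)
        (by simp only [Finset.mem_filter, Finset.mem_Icc]; omega)
        (fun l hl hne => by
          simp only [Finset.mem_filter, Finset.mem_Icc] at hl
          rw [hrel0 j l (by omega) (by omega) (by omega) (by omega) (by omega), smul_zero])]
      rw [hrel2 j (by omega) hjm, smul_smul, mul_comm]
    · rw [if_neg hjm]
      refine Finset.sum_eq_zero fun l hl => ?_
      simp only [Finset.mem_filter, Finset.mem_Icc] at hl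
      rw [hrel0 j l (by omega) (by omega) (by omega) (by omega) (by omega), smul_zero]
  rw [hj1, Finset.sum_congr rfl hj2]
  congr 1
  rw [Finset.sum_ite, Finset.sum_const_zero, add_zero]
  have hfil : ((Icc 1 (2*m+1)).erase 1).filter (fun j => j ≤ m) = Icc 2 m := by
    ext x
    simp only [Finset.mem_filter, Finset.mem_erase, Finset.mem_Icc]
    omega
  rw [hfil, Finset.sum_smul]

lemma keycoef (u v : ℕ → ℂ) (s : ℕ) (h1 : 1 ≤ s) (h2 : s ≤ 2*m+1) (hs : s-1 < 2*m+1) :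
    b.repr ⁅∑ j ∈ Icc 1 (2*m+1), u j • e j, ∑ l ∈ Icc 1 (2*m+1), v l • e l⁆ ⟨s-1, hs⟩
      = (if 3 ≤ s then u 1 * v (s-1) - u (s-1) * v 1 else 0)
        + (if s = 2*m+1 then
            ∑ j ∈ Icc 2 m, (-1:ℂ)^j * (u j * v (2*m+2-j) - u (2*m+2-j) * v j) else 0) := by
  set P : ℂ := ∑ j ∈ Icc 2 m, (-1:ℂ)^j * (u j * v (2*m+2-j) - u (2*m+2-j) * v j) with hP
  set W : ℕ → ℂ := fun k =>
    (if 3 ≤ k then u 1 * v (k-1) - u (k-1) * v 1 else 0) + (if k = 2*m+1 then P else 0)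
    with hW
  have hsum : ∑ k ∈ Icc 1 (2*m+1), W k • e k
      = ∑ l ∈ Icc 2 (2*m), (u 1 * v l - u l * v 1) • e (l+1) + P • e (2*m+1) := by
    have hsplit : ∑ k ∈ Icc 1 (2*m+1), W k • e k
        = ∑ k ∈ Icc 1 (2*m+1), (if 3 ≤ k then u 1 * v (k-1) - u (k-1) * v 1 else 0) • e k
          + ∑ k ∈ Icc 1 (2*m+1), (if k = 2*m+1 then P else 0) • e k := by
      rw [← Finset.sum_add_distrib]
      exact Finset.sum_congr rfl fun k _ => by rw [hW]; rw [add_smul]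
    rw [hsplit]
    congr 1
    · have hsub : ∑ k ∈ Icc 1 (2*m+1),
          (if 3 ≤ k then u 1 * v (k-1) - u (k-1) * v 1 else 0) • e k
          = ∑ k ∈ Icc 3 (2*m+1), (u 1 * v (k-1) - u (k-1) * v 1) • e k := by
        rw [← Finset.sum_subset (show Icc 3 (2*m+1) ⊆ Icc 1 (2*m+1) by
            intro x hx; simp only [Finset.mem_Icc] at *; omega)
          (fun x hx hnx => by
            simp only [Finset.mem_Icc] at hx hnx
            rw [if_neg (by omega), zero_smul])]
        refine Finset.sum_congr rfl fun k hk => ?_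
        simp only [Finset.mem_Icc] at hk
        rw [if_pos (by omega)]
      rw [hsub]
      rw [show Icc 3 (2*m+1) = (Icc 2 (2*m)).map (addRightEmbedding 1) from by
        rw [Finset.map_add_right_Icc]]
      rw [Finset.sum_map]
      refine Finset.sum_congr rfl fun l hl => ?_
      simp only [addRightEmbedding_apply, Nat.add_sub_cancel]
    · rw [Finset.sum_eq_single_of_mem (2*m+1)
        (by simp only [Finset.mem_Icc]; omega)
        (fun k hk hne => by rw [if_neg hne, zero_smul])]
      rw [if_pos rfl]
  rw [keybracket hm e b hb hrel1 hrel2 hrel0 u v, ← hsum, repr_sumIcc e b hb]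
  have : s - 1 + 1 = s := by omega
  rw [this]

variable (σ : L ≃ₗ[ℂ] L) (hσ : ∀ x y : L, σ ⁅x, y⁆ = ⁅σ x, σ y⁆)
    (a : ℕ → ℕ → ℂ)
    (ha : ∀ i, 1 ≤ i → i ≤ 2*m+1 → σ (e i) = ∑ k ∈ Finset.Icc 1 (2*m+1), a i k • e k)

include hσ ha

lemma rowrec : ∀ t s, 2 ≤ t → t ≤ 2*m → 1 ≤ s → s ≤ 2*m+1 →
    a (t+1) s = (if 3 ≤ s then a 1 1 * a t (s-1) - a 1 (s-1) * a t 1 else 0)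
      + (if s = 2*m+1 then
          ∑ j ∈ Icc 2 m, (-1:ℂ)^j * (a 1 j * a t (2*m+2-j) - a 1 (2*m+2-j) * a t j) else 0) := by
  intro t s ht1 ht2 hs1 hs2
  have hs : s - 1 < 2*m+1 := by omega
  have h1 : a (t+1) s = b.repr (σ (e (t+1))) ⟨s-1, hs⟩ := by
    rw [ha (t+1) (by omega) (by omega), repr_sumIcc e b hb]
    congr 1
    show s = s - 1 + 1
    omega
  have h2 : σ (e (t+1)) = ⁅∑ j ∈ Icc 1 (2*m+1), a 1 j • e j,
      ∑ l ∈ Icc 1 (2*m+1), a t l • e l⁆ := by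
    rw [← ha 1 (by omega) (by omega), ← ha t (by omega) (by omega), ← hσ,
      hrel1 t ht1 ht2]
  rw [h1, h2, keycoef hm e b hb hrel1 hrel2 hrel0 _ _ s hs1 hs2 hs]

lemma tri : ∀ i, 3 ≤ i → i ≤ 2*m+1 → ∀ k, 1 ≤ k → k < i → a i k = 0 := by
  intro i
  induction i using Nat.strong_induction_on with
  | _ i IH =>
    intro hi3 hin k hk1 hki
    obtain ⟨t, rfl⟩ : ∃ t, i = t + 1 := ⟨i - 1, by omega⟩
    rw [rowrec hm e b hb hrel1 hrel2 hrel0 σ hσ a ha t k (by omega) (by omega)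
      (by omega) (by omega)]
    rw [if_neg (show ¬ k = 2*m+1 by omega), add_zero]
    by_cases h3 : 3 ≤ k
    · rw [if_pos h3]
      have ht3 : 3 ≤ t := by omega
      rw [IH t (by omega) ht3 (by omega) (k-1) (by omega) (by omega),
        IH t (by omega) ht3 (by omega) 1 le_rfl (by omega)]
      ring
    · rw [if_neg h3]

end

theorem stmt12 {m : ℕ} (hm : 2 ≤ m)
    {L : Type} [LieRing L] [LieAlgebra ℂ L]
    (e : ℕ → L) (b : Basis (Fin (2*m+1)) ℂ L)
    (hb : ∀ i : Fin (2*m+1), b i = e (i.val+1))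
    (hrel1 : ∀ k, 2 ≤ k → k ≤ 2*m → ⁅e 1, e k⁆ = e (k+1))
    (hrel2 : ∀ k, 2 ≤ k → k ≤ m → ⁅e k, e (2*m+2-k)⁆ = ((-1:ℂ))^k • e (2*m+1))
    (hrel0 : ∀ i j, 1 ≤ i → i < j → j ≤ 2*m+1 →
      ¬(i = 1 ∧ j ≤ 2*m) → ¬(2 ≤ i ∧ i ≤ m ∧ j = 2*m+2-i) → ⁅e i, e j⁆ = 0)
    (σ : L ≃ₗ[ℂ] L)
    (hσ : ∀ x y : L, σ ⁅x, y⁆ = ⁅σ x, σ y⁆)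
    (a : ℕ → ℕ → ℂ)
    (ha : ∀ i, 1 ≤ i → i ≤ 2*m+1 → σ (e i) = ∑ k ∈ Finset.Icc 1 (2*m+1), a i k • e k)
 :
    a 1 1 ≠ 0 ∧ a 2 2 ≠ 0 ∧
    (∀ i k, 1 ≤ k → k < i → i ≤ 2*m+1 → a i k = 0) ∧
    a 1 2 = a 2 2 - a 1 1 ∧
    (∀ k, 3 ≤ k → k ≤ 2*m → a k k = a 1 1 ^ (k-2) * a 2 2) ∧
    a (2*m+1) (2*m+1) = a 1 1 ^ (2*m-2) * a 2 2 ^ 2 := by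
  have htri := tri hm e b hb hrel1 hrel2 hrel0 σ hσ a ha
  -- coefficients of the inverse automorphism
  set c : ℕ → ℕ → ℂ := fun i k =>
    if h : k - 1 < 2*m+1 then b.repr (σ.symm (e i)) ⟨k-1, h⟩ else 0 with hc
  have hσ' : ∀ x y : L, σ.symm ⁅x, y⁆ = ⁅σ.symm x, σ.symm y⁆ := by
    intro x y
    apply σ.injective
    rw [σ.apply_symm_apply, hσ, σ.apply_symm_apply, σ.apply_symm_apply]
  have hac : ∀ i, 1 ≤ i → i ≤ 2*m+1 → σ.symm (e i) = ∑ k ∈ Icc 1 (2*m+1), c i k • e k := by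
    intro i _ _
    rw [sumIcc_eq e b hb]
    have hterm : ∀ t : Fin (2*m+1), c i (t.val+1) • b t = b.repr (σ.symm (e i)) t • b t := by
      intro t
      congr 1
      rw [hc]
      simp only
      rw [dif_pos (show t.val+1-1 < 2*m+1 by omega)]
      congr 1
    rw [Finset.sum_congr rfl (fun t _ => hterm t)]
    exact (Basis.sum_repr b _).symm
  have htric := tri hm e b hb hrel1 hrel2 hrel0 σ.symm hσ' c hac
  have hcomp : ∀ i s, 1 ≤ i → i ≤ 2*m+1 → 1 ≤ s → s ≤ 2*m+1 →
      (if i = s then (1:ℂ) else 0) = ∑ k ∈ Icc 1 (2*m+1), c i k * a k s := by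
    intro i s hi1 hi2 hs1 hs2
    have hs : s - 1 < 2*m+1 := by omega
    have lhs : b.repr (e i) ⟨s-1, hs⟩ = (if i = s then (1:ℂ) else 0) := by
      have hbi : b ⟨i-1, (by omega : i-1 < 2*m+1)⟩ = e i := by
        rw [hb]
        congr 1
        show i - 1 + 1 = i
        omega
      rw [← hbi, b.repr_self, Finsupp.single_apply]
      simp only [Fin.mk.injEq]
      by_cases h : i = s
      · rw [if_pos (by omega), if_pos h]
      · rw [if_neg (by omega), if_neg h]
    have rhs : e i = ∑ t ∈ Icc 1 (2*m+1), (∑ k ∈ Icc 1 (2*m+1), c i k * a k t) • e t := by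
      conv_lhs => rw [← σ.apply_symm_apply (e i)]
      rw [hac i hi1 hi2, map_sum]
      have hterm : ∀ k ∈ Icc 1 (2*m+1),
          σ (c i k • e k) = ∑ t ∈ Icc 1 (2*m+1), (c i k * a k t) • e t := by
        intro k hk
        simp only [Finset.mem_Icc] at hk
        rw [map_smul, ha k hk.1 hk.2, Finset.smul_sum]
        exact Finset.sum_congr rfl fun t _ => by rw [smul_smul]
      rw [Finset.sum_congr rfl hterm, Finset.sum_comm]
      exact Finset.sum_congr rfl fun t _ => (Finset.sum_smul).symm
    have key := repr_sumIcc e b hb (fun t => ∑ k ∈ Icc 1 (2*m+1), c i k * a k t) ⟨s-1, hs⟩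
    rw [← rhs, lhs] at key
    have hss : s - 1 + 1 = s := by omega
    rw [hss] at key
    exact key
  -- a 2 1 * a 3 3 = 0
  have hz : a 2 1 * a 3 3 = 0 := by
    have h0 : ⁅e 2, e 3⁆ = 0 :=
      hrel0 2 3 (by omega) (by omega) (by omega) (by omega) (by omega)
    have h1 : ⁅∑ j ∈ Icc 1 (2*m+1), a 2 j • e j, ∑ l ∈ Icc 1 (2*m+1), a 3 l • e l⁆
        = (0:L) := by
      rw [← ha 2 (by omega) (by omega), ← ha 3 (by omega) (by omega), ← hσ, h0, map_zero]
    have h2 := keycoef hm e b hb hrel1 hrel2 hrel0 (a 2) (a 3) 4 (by omega) (by omega) (by omega)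
    rw [h1] at h2
    simp only [map_zero, Finsupp.coe_zero, Pi.zero_apply] at h2
    rw [if_pos (by omega), if_neg (by omega)] at h2
    rw [show (4:ℕ)-1 = 3 from by norm_num, add_zero] at h2
    have h31 : a 3 1 = 0 := htri 3 (by omega) (by omega) 1 (by omega) (by omega)
    linear_combination (-1 : ℂ) * h2 + a 2 3 * h31
  -- the c-analogue
  have hzc : c 2 1 * c 3 3 = 0 := by
    have h0 : ⁅e 2, e 3⁆ = 0 :=
      hrel0 2 3 (by omega) (by omega) (by omega) (by omega) (by omega)
    have h1 : ⁅∑ j ∈ Icc 1 (2*m+1), c 2 j • e j, ∑ l ∈ Icc 1 (2*m+1), c 3 l • e l⁆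
        = (0:L) := by
      rw [← hac 2 (by omega) (by omega), ← hac 3 (by omega) (by omega), ← hσ', h0, map_zero]
    have h2 := keycoef hm e b hb hrel1 hrel2 hrel0 (c 2) (c 3) 4 (by omega) (by omega) (by omega)
    rw [h1] at h2
    simp only [map_zero, Finsupp.coe_zero, Pi.zero_apply] at h2
    rw [if_pos (by omega), if_neg (by omega)] at h2
    rw [show (4:ℕ)-1 = 3 from by norm_num, add_zero] at h2
    have h31 : c 3 1 = 0 := htric 3 (by omega) (by omega) 1 (by omega) (by omega)
    linear_combination (-1 : ℂ) * h2 + c 2 3 * h31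
  -- 1 = c 3 3 * a 3 3
  have h33comp : (1:ℂ) = c 3 3 * a 3 3 := by
    have h := hcomp 3 3 (by omega) (by omega) (by omega) (by omega)
    rw [if_pos rfl] at h
    rw [Finset.sum_eq_single_of_mem 3 (by simp only [Finset.mem_Icc]; omega)
      (fun k hk hne => by
        simp only [Finset.mem_Icc] at hk
        by_cases hk3 : k < 3
        · rw [htric 3 (by omega) (by omega) k (by omega) hk3, zero_mul]
        · rw [htri k (by omega) (by omega) 3 (by omega) (by omega), mul_zero])] at h
    exact h
  have ha33 : a 3 3 ≠ 0 := by
    intro h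
    rw [h, mul_zero] at h33comp
    exact one_ne_zero h33comp
  have hc33 : c 3 3 ≠ 0 := by
    intro h
    rw [h, zero_mul] at h33comp
    exact one_ne_zero h33comp
  have h21 : a 2 1 = 0 := by
    rcases mul_eq_zero.1 hz with h | h
    · exact h
    · exact absurd h ha33
  have hc21 : c 2 1 = 0 := by
    rcases mul_eq_zero.1 hzc with h | h
    · exact h
    · exact absurd h hc33
  have h11 : a 1 1 ≠ 0 := by
    have h := hcomp 1 1 (by omega) (by omega) (by omega) (by omega)
    rw [if_pos rfl] at h
    rw [Finset.sum_eq_single_of_mem 1 (by simp only [Finset.mem_Icc]; omega)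
      (fun k hk hne => by
        simp only [Finset.mem_Icc] at hk
        by_cases hk2 : k = 2
        · rw [hk2, h21, mul_zero]
        · rw [htri k (by omega) (by omega) 1 (by omega) (by omega), mul_zero])] at h
    intro hz1
    rw [hz1, mul_zero] at h
    exact one_ne_zero h
  have h22 : a 2 2 ≠ 0 := by
    have h := hcomp 2 2 (by omega) (by omega) (by omega) (by omega)
    rw [if_pos rfl] at h
    rw [Finset.sum_eq_single_of_mem 2 (by simp only [Finset.mem_Icc]; omega)
      (fun k hk hne => by
        simp only [Finset.mem_Icc] at hk
        by_cases hk1 : k = 1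
        · rw [hk1, hc21, zero_mul]
        · rw [htri k (by omega) (by omega) 2 (by omega) (by omega), mul_zero])] at h
    intro hz1
    rw [hz1, mul_zero] at h
    exact one_ne_zero h
  -- a 3 3 = a 1 1 * a 2 2
  have h33 : a 3 3 = a 1 1 * a 2 2 := by
    have h := rowrec hm e b hb hrel1 hrel2 hrel0 σ hσ a ha 2 3 (by omega) (by omega)
      (by omega) (by omega)
    rw [if_pos (by omega), if_neg (by omega)] at h
    rw [show (3:ℕ)-1 = 2 from by norm_num, add_zero] at h
    rw [h, h21, mul_zero, sub_zero]
  -- recursion for the diagonal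
  have hstep : ∀ k, 3 ≤ k → k+1 ≤ 2*m → a (k+1) (k+1) = a 1 1 * a k k := by
    intro k h3 h2m
    have h := rowrec hm e b hb hrel1 hrel2 hrel0 σ hσ a ha k (k+1) (by omega) (by omega)
      (by omega) (by omega)
    rw [if_pos (by omega), if_neg (by omega)] at h
    simp only [Nat.add_sub_cancel, add_zero] at h
    rw [htri k (by omega) (by omega) 1 (by omega) (by omega)] at h
    rw [h]
    ring
  have hdiag : ∀ k, 3 ≤ k → k ≤ 2*m → a k k = a 1 1 ^ (k-2) * a 2 2 := by
    intro k hk3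
    induction k, hk3 using Nat.le_induction with
    | base =>
      intro _
      rw [h33]
      norm_num
    | succ k hk IH =>
      intro hk2m
      rw [hstep k hk (by omega), IH (by omega),
        show k+1-2 = (k-2)+1 by omega, pow_succ]
      ring
  -- evaluation of the correction sum against row 2m
  have hsum2m : ∀ u : ℕ → ℂ,
      ∑ j ∈ Icc 2 m, (-1:ℂ)^j * (u j * a (2*m) (2*m+2-j) - u (2*m+2-j) * a (2*m) j)
        = u 2 * a (2*m) (2*m) := by
    intro u
    rw [Finset.sum_eq_single_of_mem 2 (by simp only [Finset.mem_Icc]; omega)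
      (fun j hj hne => by
        simp only [Finset.mem_Icc] at hj
        rw [htri (2*m) (by omega) (by omega) (2*m+2-j) (by omega) (by omega),
          htri (2*m) (by omega) (by omega) j (by omega) (by omega)]
        ring)]
    rw [show 2*m+2-2 = 2*m by omega,
      htri (2*m) (by omega) (by omega) 2 (by omega) (by omega)]
    norm_num
  have hA2m : a (2*m) (2*m) = a 1 1 ^ (2*m-2) * a 2 2 := hdiag (2*m) (by omega) (by omega)
  have hAne : a (2*m) (2*m) ≠ 0 := by
    rw [hA2m]
    exact mul_ne_zero (pow_ne_zero _ h11) h22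
  have hX1 : a (2*m+1) (2*m+1) = a 1 1 * a (2*m) (2*m) + a 1 2 * a (2*m) (2*m) := by
    have h := rowrec hm e b hb hrel1 hrel2 hrel0 σ hσ a ha (2*m) (2*m+1) (by omega)
      le_rfl (by omega) le_rfl
    rw [if_pos (by omega), if_pos rfl, show 2*m+1-1 = 2*m from by omega,
      hsum2m (a 1), htri (2*m) (by omega) (by omega) 1 (by omega) (by omega)] at h
    rw [h]
    ring
  have hX2 : a (2*m+1) (2*m+1) = a 2 2 * a (2*m) (2*m) := by
    have hbr : ⁅e 2, e (2*m)⁆ = e (2*m+1) := by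
      have h := hrel2 2 le_rfl hm
      rw [show 2*m+2-2 = 2*m by omega] at h
      rw [h]
      norm_num
    have h1 : ⁅∑ j ∈ Icc 1 (2*m+1), a 2 j • e j, ∑ l ∈ Icc 1 (2*m+1), a (2*m) l • e l⁆
        = σ (e (2*m+1)) := by
      rw [← ha 2 (by omega) (by omega), ← ha (2*m) (by omega) (by omega), ← hσ, hbr]
    have h2 := keycoef hm e b hb hrel1 hrel2 hrel0 (a 2) (a (2*m)) (2*m+1) (by omega)
      le_rfl (by omega)
    rw [h1] at h2
    have h3 : b.repr (σ (e (2*m+1))) ⟨2*m+1-1, by omega⟩ = a (2*m+1) (2*m+1) := by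
      rw [ha (2*m+1) (by omega) le_rfl, repr_sumIcc e b hb]
      congr 1
    rw [h3, if_pos (by omega), if_pos rfl, show 2*m+1-1 = 2*m from by omega,
      hsum2m (a 2), htri (2*m) (by omega) (by omega) 1 (by omega) (by omega), h21] at h2
    rw [h2]
    ring
  have h12 : a 1 2 = a 2 2 - a 1 1 := by
    have heq : (a 1 1 + a 1 2) * a (2*m) (2*m) = a 2 2 * a (2*m) (2*m) := by
      rw [add_mul, ← hX1, hX2]
    have := mul_right_cancel₀ hAne heq
    linear_combination this
  refine ⟨h11, h22, ?_, h12, hdiag, ?_⟩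
  · intro i k hk1 hki hi
    by_cases h3 : 3 ≤ i
    · exact htri i h3 hi k hk1 hki
    · have : i = 2 ∧ k = 1 := by omega
      rw [this.1, this.2]
      exact h21
  · rw [hX2, hA2m]
    ring
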